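/- arXiv:2312.06604 — 4 statements merged into one kernel-verified Lean document; each statement's English description precedes it below -/
import Mathlib

section
/- Let π : V → V be a permutation of a finite set V with n = |V| elements, and let P_π be the induced operator on functions (P_π f)(v) = f(π⁻¹ v). For any subsets A, B of V, define Σ_{π,S} = (⟨P_π 1_S, 1_S⟩ + ⟨P_π 1_{Sᶜ}, 1_{Sᶜ}⟩)/n. Then |Σ_{π,A} - Σ_{π,B}| ≤ √2 · √((|A ∩ Bᶜ| + |Aᶜ ∩ B|)/n). -/
/-!
Writing `T S` for the number of points `v` at which `π⁻¹ v ∈ S` and `v ∈ S` disagree,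
`Σ_{π,S} = 1 - T S / n`. The count `T S` changes by at most `2 |A Δ B|` when `S` passes from
`A` to `B` (each changed point affects two terms), and `Σ_{π,S} ∈ [0, 1]`. Hence
`|Σ_{π,A} - Σ_{π,B}| ≤ min (2 |A Δ B| / n) 1 ≤ √(2 |A Δ B| / n)`.
-/

open Finset

lemma le_sqrt_of_le_of_le_one {a x : ℝ} (hax : a ≤ x) (ha : a ≤ 1) : a ≤ √x := by
  rcases le_or_gt a 0 with ha0 | ha0
  · exact ha0.trans (Real.sqrt_nonneg x)
  · exact (Real.le_sqrt' ha0).mpr (by nlinarith)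

section PermVariation

variable {V : Type*} [Fintype V]

def permVariation (π : Equiv.Perm V) (f : V → ℝ) : ℝ :=
  ∑ v, |f (π.symm v) - f v|

lemma abs_permVariation_sub_le (π : Equiv.Perm V) (f g : V → ℝ) :
    |permVariation π f - permVariation π g| ≤ 2 * ∑ v, |f v - g v| := by
  have hpoint : ∀ v, |(f (π.symm v) - f v) - (g (π.symm v) - g v)| ≤
      |f (π.symm v) - g (π.symm v)| + |f v - g v| := fun v => by
    rw [show (f (π.symm v) - f v) - (g (π.symm v) - g v) =
      (f (π.symm v) - g (π.symm v)) - (f v - g v) by ring]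
    exact abs_sub _ _
  calc |permVariation π f - permVariation π g|
      ≤ ∑ v, |(f (π.symm v) - f v) - (g (π.symm v) - g v)| := by
        rw [permVariation, permVariation, ← sum_sub_distrib]
        exact (abs_sum_le_sum_abs _ _).trans
          (sum_le_sum fun v _ => abs_abs_sub_abs_le_abs_sub _ _)
    _ ≤ ∑ v, (|f (π.symm v) - g (π.symm v)| + |f v - g v|) := sum_le_sum fun v _ => hpoint v
    _ = 2 * ∑ v, |f v - g v| := by
        rw [sum_add_distrib, Equiv.sum_comp π.symm (fun v => |f v - g v|)]
        ring

lemma permVariation_nonneg (π : Equiv.Perm V) (f : V → ℝ) : 0 ≤ permVariation π f :=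
  sum_nonneg fun _ _ => abs_nonneg _

variable [DecidableEq V]

lemma permVariation_indicator_le_card (π : Equiv.Perm V) (S : Finset V) :
    permVariation π (fun v => if v ∈ S then 1 else 0) ≤ Fintype.card V := by
  calc permVariation π (fun v => if v ∈ S then 1 else 0) ≤ ∑ _v : V, (1 : ℝ) :=
        sum_le_sum fun v _ => by dsimp only; split_ifs <;> norm_num
    _ = Fintype.card V := by simp

lemma sum_indicator_mul_add_compl (π : Equiv.Perm V) (S : Finset V) :
    (∑ v, (if π.symm v ∈ S then (1 : ℝ) else 0) * (if v ∈ S then 1 else 0)) +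
      (∑ v, (if π.symm v ∈ Sᶜ then (1 : ℝ) else 0) * (if v ∈ Sᶜ then 1 else 0)) =
      Fintype.card V - permVariation π (fun v => if v ∈ S then 1 else 0) := by
  rw [permVariation, ← sum_add_distrib, ← nsmul_one, ← card_univ, ← sum_const,
    ← sum_sub_distrib]
  refine sum_congr rfl fun v _ => ?_
  simp only [mem_compl]
  split_ifs <;> norm_num

lemma sum_abs_indicator_sub_indicator (A B : Finset V) :
    ∑ v, |(if v ∈ A then (1 : ℝ) else 0) - (if v ∈ B then 1 else 0)| =
      #(A ∩ Bᶜ) + #(Aᶜ ∩ B) := by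
  have hcard (S : Finset V) : (#S : ℝ) = ∑ v, if v ∈ S then 1 else 0 := by simp
  rw [hcard, hcard, ← sum_add_distrib]
  refine sum_congr rfl fun v _ => ?_
  by_cases hA : v ∈ A <;> by_cases hB : v ∈ B <;> simp [hA, hB]

end PermVariation

/-- For a permutation `π` of a finite set `V` with `n` elements, with
`Σ_{π,S} = (⟨P_π 1_S, 1_S⟩ + ⟨P_π 1_{Sᶜ}, 1_{Sᶜ}⟩)/n` where `(P_π f)(v) = f(π⁻¹ v)`,
one has `|Σ_{π,A} - Σ_{π,B}| ≤ √2 · √((|A ∩ Bᶜ| + |Aᶜ ∩ B|)/n)`. -/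
theorem sigma_diff_bound {V : Type*} [Fintype V] [DecidableEq V]
    (π : Equiv.Perm V) (A B : Finset V) :
    let n : ℝ := (Fintype.card V : ℝ)
    let ind : Finset V → V → ℝ := fun S v => if v ∈ S then 1 else 0
    let Sig : Finset V → ℝ := fun S =>
      ((∑ v, ind S (π.symm v) * ind S v) + (∑ v, ind Sᶜ (π.symm v) * ind Sᶜ v)) / n
    |Sig A - Sig B| ≤
      Real.sqrt 2 * Real.sqrt ((((A ∩ Bᶜ).card : ℝ) + ((Aᶜ ∩ B).card : ℝ)) / n) := by
  intro n ind Sig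
  set T : Finset V → ℝ := fun S => permVariation π (ind S)
  have hdiff : |Sig A - Sig B| = |T A - T B| / n := by
    simp only [Sig, ind, sum_indicator_mul_add_compl, T, ← sub_div, abs_div, Nat.abs_cast, n]
    rw [← abs_neg]
    ring_nf
  have hn : 0 ≤ n := Nat.cast_nonneg _
  have hsymm : |T A - T B| ≤ 2 * (#(A ∩ Bᶜ) + #(Aᶜ ∩ B)) := by
    rw [← sum_abs_indicator_sub_indicator]
    exact abs_permVariation_sub_le π _ _
  have hunit : |T A - T B| ≤ n := abs_sub_le_iff.mpr
    ⟨by linarith [permVariation_indicator_le_card π A, permVariation_nonneg π (ind B)],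
     by linarith [permVariation_indicator_le_card π B, permVariation_nonneg π (ind A)]⟩
  rw [hdiff, ← Real.sqrt_mul zero_le_two, ← mul_div_assoc]
  exact le_sqrt_of_le_of_le_one (div_le_div_of_nonneg_right hsymm hn)
    (div_le_one_of_le₀ hunit hn)
end

section
/- Let T be a self-adjoint operator on ℓ²(V) for a finite set V with |V| = n ≥ 2, with nonnegative entries, constant row sum d > 0, and second largest eigenvalue dμ₂ with μ₂ ≠ 1. Let f be a real eigenfunction of T with eigenvalue dμ, orthogonal to the constant function 1_V, with μ ≠ -1 and κ := (1+μ)/(1-μ₂) ∈ (0,1). Define f_sml := |f| - ⟨|f|, u⟩ u where u = (1/√n) 1_V. Then ‖f_sml‖₂² ≤ κ ‖f‖₂². -/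
open Finset

/-!
With `Q(g) = ∑ a_{uv} g_u g_v` and the Dirichlet form `E(g) = ½ ∑ a_{uv} (g_u - g_v)²` one has
`Q(g) = d‖g‖² - E(g)`, and `E` does not change when a constant is subtracted from `g`. Applied to
`f_sml = |f| - m`, the Rayleigh bound `Q(f_sml) ≤ dμ₂‖f_sml‖²` becomes
`d(1 - μ₂)‖f_sml‖² ≤ E(|f|) = d‖f‖² - Q(|f|)`, and `Q(|f|) ≥ -Q(f) = -dμ‖f‖²`.
Since `E ≥ 0`, the same comparison forces `μ ≥ -1`, so `κ > 0` makes `1 - μ₂` positive.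
-/

namespace WeightedGraph

variable {V : Type*} [Fintype V]

noncomputable def quadForm (a : V → V → ℝ) (g : V → ℝ) : ℝ :=
  ∑ u, ∑ v, a u v * g u * g v

noncomputable def dirichletForm (a : V → V → ℝ) (g : V → ℝ) : ℝ :=
  (∑ u, ∑ v, a u v * (g u - g v) ^ 2) / 2

theorem dirichletForm_nonneg {a : V → V → ℝ} (hnn : ∀ u v, 0 ≤ a u v) (g : V → ℝ) :
    0 ≤ dirichletForm a g :=
  div_nonneg (sum_nonneg fun u _ => sum_nonneg fun v _ =>
    mul_nonneg (hnn u v) (sq_nonneg _)) zero_le_two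

theorem dirichletForm_sub_const (a : V → V → ℝ) (g : V → ℝ) (c : ℝ) :
    dirichletForm a (fun v => g v - c) = dirichletForm a g := by
  simp only [dirichletForm, sub_sub_sub_cancel_right]

theorem sum_sum_mul_sq_left {a : V → V → ℝ} {d : ℝ} (hrow : ∀ u, ∑ v, a u v = d)
    (g : V → ℝ) : ∑ u, ∑ v, a u v * g u ^ 2 = d * ∑ v, g v ^ 2 := by
  simp only [← sum_mul, hrow, mul_sum]

theorem quadForm_eq_sub_dirichletForm {a : V → V → ℝ} (hsym : ∀ u v, a u v = a v u) {d : ℝ}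
    (hrow : ∀ u, ∑ v, a u v = d) (g : V → ℝ) :
    quadForm a g = d * ∑ v, g v ^ 2 - dirichletForm a g := by
  have hright : ∑ u, ∑ v, a u v * g v ^ 2 = d * ∑ v, g v ^ 2 := by
    rw [sum_comm]
    simp_rw [hsym _ (_ : V)]
    exact sum_sum_mul_sq_left hrow g
  have hexpand : ∑ u, ∑ v, a u v * (g u - g v) ^ 2 =
      ∑ u, ∑ v, a u v * g u ^ 2 + ∑ u, ∑ v, a u v * g v ^ 2 - 2 * quadForm a g := by
    simp only [quadForm, mul_sum, ← sum_add_distrib, ← sum_sub_distrib]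
    refine sum_congr rfl fun u _ => sum_congr rfl fun v _ => ?_
    ring
  rw [dirichletForm, hexpand, sum_sum_mul_sq_left hrow, hright]
  ring

theorem abs_quadForm_le_quadForm_abs {a : V → V → ℝ} (hnn : ∀ u v, 0 ≤ a u v) (f : V → ℝ) :
    |quadForm a f| ≤ quadForm a (fun v => |f v|) := by
  refine (abs_sum_le_sum_abs _ _).trans (sum_le_sum fun u _ => ?_)
  refine (abs_sum_le_sum_abs _ _).trans_eq (sum_congr rfl fun v _ => ?_)
  rw [abs_mul, abs_mul, abs_of_nonneg (hnn u v)]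

theorem quadForm_eq_of_eigen {a : V → V → ℝ} {c : ℝ} {f : V → ℝ}
    (heig : ∀ u, ∑ v, a u v * f v = c * f u) : quadForm a f = c * ∑ v, f v ^ 2 := by
  calc quadForm a f = ∑ u, f u * ∑ v, a u v * f v := by
        simp only [quadForm, mul_sum]
        exact sum_congr rfl fun u _ => sum_congr rfl fun v _ => by ring
    _ = c * ∑ v, f v ^ 2 := by
        simp only [heig, mul_sum]
        exact sum_congr rfl fun u _ => by ring

theorem sum_sub_average_eq_zero (g : V → ℝ) :
    ∑ v, (g v - (∑ w, g w) / Fintype.card V) = 0 := by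
  rcases isEmpty_or_nonempty V with _ | _
  · simp
  rw [sum_sub_distrib, sum_const, card_univ, nsmul_eq_mul,
    mul_div_cancel₀ _ (Nat.cast_ne_zero.mpr Fintype.card_ne_zero), sub_self]

end WeightedGraph

open WeightedGraph in
theorem abs_sml_norm_sq_le_general {V : Type*} [Fintype V]
    (a : V → V → ℝ) (hsym : ∀ u v, a u v = a v u) (hnn : ∀ u v, 0 ≤ a u v)
    (d μ μ₂ : ℝ) (hd : 0 < d) (hrow : ∀ u, ∑ v, a u v = d)
    (hray : ∀ g : V → ℝ, (∑ v, g v) = 0 →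
      (∑ u, ∑ v, a u v * g u * g v) ≤ d * μ₂ * ∑ v, g v ^ 2)
    (f : V → ℝ) (heig : ∀ u, ∑ v, a u v * f v = d * μ * f u)
    (hκ : 0 < (1 + μ) / (1 - μ₂) ∧ (1 + μ) / (1 - μ₂) < 1) :
    (∑ v, (|f v| - (∑ w, |f w|) / (Fintype.card V : ℝ)) ^ 2) ≤
      ((1 + μ) / (1 - μ₂)) * ∑ v, f v ^ 2 := by
  by_cases hf : f = 0
  · simp [hf]
  set F := ∑ v, f v ^ 2
  have hFpos : 0 < F := by
    obtain ⟨v, hv⟩ := Function.ne_iff.mp hf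
    exact sum_pos' (fun v _ => sq_nonneg (f v)) ⟨v, mem_univ v, sq_pos_of_ne_zero hv⟩
  set g : V → ℝ := fun v => |f v|
  set h : V → ℝ := fun v => g v - (∑ w, g w) / Fintype.card V
  have hgF : ∑ v, g v ^ 2 = F := by simp only [g, sq_abs, F]
  have hQg_lower : -(d * μ * F) ≤ quadForm a g := by
    rw [← quadForm_eq_of_eigen heig]
    exact (neg_le_abs _).trans (abs_quadForm_le_quadForm_abs hnn f)
  have hQg : quadForm a g = d * F - dirichletForm a g := by
    rw [quadForm_eq_sub_dirichletForm hsym hrow, hgF]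
  have hQh : quadForm a h = d * ∑ v, h v ^ 2 - dirichletForm a g := by
    rw [quadForm_eq_sub_dirichletForm hsym hrow, dirichletForm_sub_const]
  have hray_h : quadForm a h ≤ d * μ₂ * ∑ v, h v ^ 2 := hray h (sum_sub_average_eq_zero g)
  have h1μ_nonneg : 0 ≤ 1 + μ := by
    have : d * F * 0 ≤ d * F * (1 + μ) := by linarith [dirichletForm_nonneg hnn g]
    exact le_of_mul_le_mul_left this (mul_pos hd hFpos)
  have h1μ₂_pos : 0 < 1 - μ₂ := (div_pos_iff_of_pos_left
    (lt_of_le_of_ne h1μ_nonneg fun h0 => by simp [← h0] at hκ)).mp hκ.1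
  rw [div_mul_eq_mul_div, le_div_iff₀ h1μ₂_pos]
  exact le_of_mul_le_mul_left (by linarith) hd

/-- Let `T` be self-adjoint on `ℓ²(V)`, `|V| = n ≥ 2`, with nonnegative entries,
constant row sums `d > 0`, and second largest eigenvalue `d·μ₂` (expressed through the
Rayleigh quotient bound on the orthogonal complement of constants), `μ₂ ≠ 1`.  Let `f`
be a real eigenfunction with eigenvalue `d·μ`, orthogonal to `1_V`, with `μ ≠ -1` and
`κ = (1+μ)/(1-μ₂) ∈ (0,1)`.  With `f_sml = |f| - ⟨|f|,u⟩u`, `u = (1/√n)1_V`,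
one has `‖f_sml‖₂² ≤ κ‖f‖₂²`. -/
theorem abs_sml_norm_sq_le {V : Type*} [Fintype V] (hV : 2 ≤ Fintype.card V)
    (a : V → V → ℝ) (hsym : ∀ u v, a u v = a v u) (hnn : ∀ u v, 0 ≤ a u v)
    (d μ μ₂ : ℝ) (hd : 0 < d) (hrow : ∀ u, ∑ v, a u v = d)
    (hray : ∀ g : V → ℝ, (∑ v, g v) = 0 →
      (∑ u, ∑ v, a u v * g u * g v) ≤ d * μ₂ * ∑ v, g v ^ 2)
    (hμ₂ : μ₂ ≠ 1)
    (f : V → ℝ) (heig : ∀ u, ∑ v, a u v * f v = d * μ * f u)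
    (horth : (∑ v, f v) = 0) (hμ : μ ≠ -1)
    (hκ : 0 < (1 + μ) / (1 - μ₂) ∧ (1 + μ) / (1 - μ₂) < 1) :
    (∑ v, (|f v| - (∑ w, |f w|) / (Fintype.card V : ℝ)) ^ 2) ≤
      ((1 + μ) / (1 - μ₂)) * ∑ v, f v ^ 2 :=
  abs_sml_norm_sq_le_general a hsym hnn d μ μ₂ hd hrow hray f heig hκ
end

section
/- With the notation of the decomposition lemma: let f be a real eigenfunction of T (self-adjoint, nonnegative entries, row sums d, second largest eigenvalue dμ₂ ≠ d) with eigenvalue dμ, orthogonal to 1_V, nonzero everywhere, and with κ := (1+μ)/(1-μ₂) ∈ (0,1). Define f_str := ⟨f, (1/√n)(1_{f>0} - 1_{f<0})⟩ · (1/√n)(1_{f>0} - 1_{f<0}) and f_sml := f - f_str. Then ‖f_sml‖₂ ≤ √κ ‖f‖₂ and ‖f_str‖₂ ≥ √(1-κ) ‖f‖₂. -/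
open Finset

/-!
Since `f` is nowhere zero, `fStr f = (s / n) • sgnInd f` with `s = ∑ |f v|`, and it is the
orthogonal projection of `f` onto `sgnInd f`; hence `‖fStr f‖² = s² / n` and
`‖f - fStr f‖² = ‖f‖² - s² / n`. Both bounds therefore reduce to `(1 - κ) ‖f‖² ≤ s² / n`.
This comes from the Rayleigh bound for `|f|` minus its mean, whose quadratic form is
`⟨T|f|, |f|⟩ - d s² / n`, combined with `⟨T|f|, |f|⟩ ≥ -⟨Tf, f⟩ = -dμ ‖f‖²` (nonnegative
entries). Dividing by `1 - μ₂` is legitimate because `κ > 0` and `μ ≥ -1`.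
-/

/-- The signed indicator `1_{f>0} - 1_{f<0}`. -/
noncomputable def sgnInd {V : Type*} (f : V → ℝ) : V → ℝ :=
  fun v => if 0 < f v then 1 else if f v < 0 then -1 else 0

/-- The structured component
`f_str = ⟨f, (1/√n)(1_{f>0} - 1_{f<0})⟩ · (1/√n)(1_{f>0} - 1_{f<0})`. -/
noncomputable def fStr {V : Type*} [Fintype V] (f : V → ℝ) : V → ℝ :=
  fun v => ((∑ w, f w * sgnInd f w) / (Fintype.card V : ℝ)) * sgnInd f v

lemma mul_sgnInd {V : Type*} (f : V → ℝ) (v : V) : f v * sgnInd f v = |f v| := by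
  unfold sgnInd
  split_ifs with hpos hneg
  · simp [abs_of_pos hpos]
  · simp [abs_of_neg hneg]
  · simp [le_antisymm (not_lt.mp hpos) (not_lt.mp hneg)]

lemma sgnInd_sq {V : Type*} {f : V → ℝ} {v : V} (hv : f v ≠ 0) : sgnInd f v ^ 2 = 1 := by
  unfold sgnInd
  split_ifs with hpos hneg
  · norm_num
  · norm_num
  · exact absurd (le_antisymm (not_lt.mp hpos) (not_lt.mp hneg)) hv

section

variable {V : Type*} [Fintype V]

lemma div_card_sq_mul_card (s : ℝ) :
    (s / Fintype.card V) ^ 2 * Fintype.card V = s ^ 2 / Fintype.card V := by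
  rcases eq_or_ne (Fintype.card V : ℝ) 0 with hn | hn
  · simp [hn]
  · field_simp

lemma sum_sub_div_card [Nonempty V] (g : V → ℝ) :
    ∑ v, (g v - (∑ w, g w) / Fintype.card V) = 0 := by
  rw [sum_sub_distrib, sum_const, card_univ, nsmul_eq_mul,
    mul_div_cancel₀ _ (Nat.cast_ne_zero.mpr Fintype.card_ne_zero), sub_self]

lemma sum_sub_div_card_sq (g : V → ℝ) :
    ∑ v, (g v - (∑ w, g w) / Fintype.card V) ^ 2
      = ∑ v, g v ^ 2 - (∑ v, g v) ^ 2 / Fintype.card V := by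
  simp only [sub_sq, sum_add_distrib, sum_sub_distrib, ← sum_mul, ← mul_sum, sum_const,
    card_univ, nsmul_eq_mul]
  rw [mul_comm (Fintype.card V : ℝ), div_card_sq_mul_card]
  ring

lemma sum_fStr_sq {f : V → ℝ} (hf : ∀ v, f v ≠ 0) :
    ∑ v, fStr f v ^ 2 = (∑ v, |f v|) ^ 2 / Fintype.card V := by
  simp only [fStr, mul_sgnInd, mul_pow, sgnInd_sq (hf _), mul_one, sum_const, card_univ,
    nsmul_eq_mul]
  rw [mul_comm, div_card_sq_mul_card]

lemma sum_mul_fStr (f : V → ℝ) :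
    ∑ v, f v * fStr f v = (∑ v, |f v|) ^ 2 / Fintype.card V := by
  simp only [fStr, mul_sgnInd, mul_left_comm (f _), ← mul_sum]
  ring

lemma sum_sub_fStr_sq {f : V → ℝ} (hf : ∀ v, f v ≠ 0) :
    ∑ v, (f v - fStr f v) ^ 2 = ∑ v, f v ^ 2 - (∑ v, |f v|) ^ 2 / Fintype.card V := by
  simp only [sub_sq, sum_add_distrib, sum_sub_distrib, mul_assoc, ← mul_sum, sum_mul_fStr,
    sum_fStr_sq hf]
  ring

variable {a : V → V → ℝ} {d μ : ℝ}

lemma sum_sum_mul_left (hrow : ∀ u, ∑ v, a u v = d) (g : V → ℝ) :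
    ∑ u, ∑ v, a u v * g u = d * ∑ u, g u := by
  simp only [← sum_mul, hrow, mul_sum]

lemma sum_sum_mul_right (hsym : ∀ u v, a u v = a v u) (hrow : ∀ u, ∑ v, a u v = d)
    (g : V → ℝ) : ∑ u, ∑ v, a u v * g v = d * ∑ v, g v := by
  rw [sum_comm]
  simp only [hsym _ (_ : V)]
  exact sum_sum_mul_left hrow g

lemma neg_mul_sum_sq_le (hsym : ∀ u v, a u v = a v u) (hnn : ∀ u v, 0 ≤ a u v)
    (hrow : ∀ u, ∑ v, a u v = d) (g : V → ℝ) :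
    -(d * ∑ v, g v ^ 2) ≤ ∑ u, ∑ v, a u v * g u * g v := by
  have hexpand : ∑ u, ∑ v, a u v * (g u + g v) ^ 2
      = ∑ u, ∑ v, a u v * g u ^ 2 + 2 * ∑ u, ∑ v, a u v * g u * g v
        + ∑ u, ∑ v, a u v * g v ^ 2 := by
    simp only [mul_sum, ← sum_add_distrib]
    exact sum_congr rfl fun u _ => sum_congr rfl fun v _ => by ring
  have hnonneg : 0 ≤ ∑ u, ∑ v, a u v * (g u + g v) ^ 2 :=
    sum_nonneg fun u _ => sum_nonneg fun v _ => mul_nonneg (hnn u v) (sq_nonneg _)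
  rw [hexpand, sum_sum_mul_left hrow, sum_sum_mul_right hsym hrow] at hnonneg
  linarith

lemma neg_le_sum_sum_abs_mul_abs (hnn : ∀ u v, 0 ≤ a u v) (g : V → ℝ) :
    -∑ u, ∑ v, a u v * g u * g v ≤ ∑ u, ∑ v, a u v * |g u| * |g v| := by
  rw [← sum_neg_distrib]
  refine sum_le_sum fun u _ => ?_
  rw [← sum_neg_distrib]
  refine sum_le_sum fun v _ => ?_
  rw [mul_assoc, mul_assoc, ← mul_neg, ← abs_mul]
  exact mul_le_mul_of_nonneg_left (neg_le_abs _) (hnn u v)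

lemma sum_sum_mul_sub_const (hsym : ∀ u v, a u v = a v u) (hrow : ∀ u, ∑ v, a u v = d)
    (g : V → ℝ) (c : ℝ) :
    ∑ u, ∑ v, a u v * (g u - c) * (g v - c)
      = ∑ u, ∑ v, a u v * g u * g v - 2 * c * d * ∑ v, g v
        + c ^ 2 * d * Fintype.card V := by
  have hexpand : ∑ u, ∑ v, a u v * (g u - c) * (g v - c)
      = ∑ u, ∑ v, a u v * g u * g v - c * ∑ u, ∑ v, a u v * g u
        - c * ∑ u, ∑ v, a u v * g v + c ^ 2 * ∑ u, ∑ v, a u v := by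
    simp only [mul_sum, ← sum_add_distrib, ← sum_sub_distrib]
    exact sum_congr rfl fun u _ => sum_congr rfl fun v _ => by ring
  rw [hexpand, sum_sum_mul_left hrow, sum_sum_mul_right hsym hrow]
  simp only [hrow, sum_const, card_univ, nsmul_eq_mul]
  ring

lemma sum_sum_mul_of_eigen {f : V → ℝ} (heig : ∀ u, ∑ v, a u v * f v = d * μ * f u) :
    ∑ u, ∑ v, a u v * f u * f v = d * μ * ∑ v, f v ^ 2 := by
  have hterm : ∀ u, ∑ v, a u v * f u * f v = f u * (d * μ * f u) := fun u => by
    rw [← heig u, mul_sum]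
    exact sum_congr rfl fun v _ => by ring
  simp only [hterm, mul_sum]
  exact sum_congr rfl fun u _ => by ring

lemma neg_one_le_of_eigen {f : V → ℝ} (hsym : ∀ u v, a u v = a v u) (hnn : ∀ u v, 0 ≤ a u v)
    (hrow : ∀ u, ∑ v, a u v = d) (hd : 0 < d)
    (heig : ∀ u, ∑ v, a u v * f v = d * μ * f u) (hf : f ≠ 0) : -1 ≤ μ := by
  have hF : 0 < ∑ v, f v ^ 2 := by
    obtain ⟨v, hv⟩ := Function.ne_iff.mp hf
    exact sum_pos' (fun w _ => sq_nonneg (f w)) ⟨v, mem_univ v, sq_pos_of_ne_zero hv⟩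
  have h := neg_mul_sum_sq_le hsym hnn hrow f
  rw [sum_sum_mul_of_eigen heig] at h
  nlinarith [mul_pos hd hF]

lemma neg_add_mul_sum_sq_le [Nonempty V] {μ₂ : ℝ} {f : V → ℝ} (hsym : ∀ u v, a u v = a v u)
    (hnn : ∀ u v, 0 ≤ a u v) (hrow : ∀ u, ∑ v, a u v = d) (hd : 0 < d)
    (hray : ∀ g : V → ℝ, (∑ v, g v) = 0 →
      (∑ u, ∑ v, a u v * g u * g v) ≤ d * μ₂ * ∑ v, g v ^ 2)
    (heig : ∀ u, ∑ v, a u v * f v = d * μ * f u) :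
    -(μ + μ₂) * ∑ v, f v ^ 2 ≤ (1 - μ₂) * ((∑ v, |f v|) ^ 2 / Fintype.card V) := by
  set n : ℝ := (Fintype.card V : ℝ)
  set s := ∑ v, |f v|
  have habs : ∑ v, |f v| ^ 2 = ∑ v, f v ^ 2 := by simp only [sq_abs]
  have h := hray (fun v => |f v| - s / n) (sum_sub_div_card _)
  rw [sum_sum_mul_sub_const hsym hrow, sum_sub_div_card_sq, habs] at h
  have hA := neg_le_sum_sum_abs_mul_abs hnn f
  rw [sum_sum_mul_of_eigen heig] at hA
  have hc : (s / n) ^ 2 * n = s ^ 2 / n := div_card_sq_mul_card s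
  refine le_of_mul_le_mul_left ?_ hd
  linear_combination h + hA - d * hc

end

theorem decomposition_str_sml_general {V : Type*} [Fintype V]
    (a : V → V → ℝ) (hsym : ∀ u v, a u v = a v u) (hnn : ∀ u v, 0 ≤ a u v)
    (d μ μ₂ : ℝ) (hd : 0 < d) (hrow : ∀ u, ∑ v, a u v = d)
    (hray : ∀ g : V → ℝ, (∑ v, g v) = 0 →
      (∑ u, ∑ v, a u v * g u * g v) ≤ d * μ₂ * ∑ v, g v ^ 2)
    (f : V → ℝ) (heig : ∀ u, ∑ v, a u v * f v = d * μ * f u)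
    (hnz : ∀ v, f v ≠ 0)
    (hκ : 0 < (1 + μ) / (1 - μ₂) ∧ (1 + μ) / (1 - μ₂) < 1) :
    Real.sqrt (∑ v, (f v - fStr f v) ^ 2) ≤
        Real.sqrt ((1 + μ) / (1 - μ₂)) * Real.sqrt (∑ v, f v ^ 2) ∧
      Real.sqrt (∑ v, fStr f v ^ 2) ≥
        Real.sqrt (1 - (1 + μ) / (1 - μ₂)) * Real.sqrt (∑ v, f v ^ 2) := by
  rcases isEmpty_or_nonempty V with _ | _
  · simp
  have hμ : -1 ≤ μ := neg_one_le_of_eigen hsym hnn hrow hd heig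
    fun h => hnz (Classical.arbitrary V) (congrFun h _)
  have hμ₂ : 0 < 1 - μ₂ := by
    rcases div_pos_iff.mp hκ.1 with h | h
    · exact h.2
    · linarith [h.1]
  have hkey : (1 - (1 + μ) / (1 - μ₂)) * ∑ v, f v ^ 2 ≤ (∑ v, |f v|) ^ 2 / Fintype.card V := by
    rw [one_sub_div hμ₂.ne', div_mul_eq_mul_div, div_le_iff₀ hμ₂]
    linarith [neg_add_mul_sum_sq_le hsym hnn hrow hd hray heig]
  rw [sum_sub_fStr_sq hnz, sum_fStr_sq hnz, ← Real.sqrt_mul hκ.1.le,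
    ← Real.sqrt_mul (sub_nonneg.mpr hκ.2.le)]
  exact ⟨Real.sqrt_le_sqrt (by linarith), Real.sqrt_le_sqrt hkey⟩

/-- Decomposition lemma: for a nowhere-zero eigenfunction `f` of `T` with eigenvalue
`d·μ`, orthogonal to `1_V`, with `κ = (1+μ)/(1-μ₂) ∈ (0,1)`, the components
`f_str` and `f_sml = f - f_str` satisfy `‖f_sml‖₂ ≤ √κ ‖f‖₂` and
`‖f_str‖₂ ≥ √(1-κ) ‖f‖₂`. -/
theorem decomposition_str_sml {V : Type*} [Fintype V] (hV : 2 ≤ Fintype.card V)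
    (a : V → V → ℝ) (hsym : ∀ u v, a u v = a v u) (hnn : ∀ u v, 0 ≤ a u v)
    (hint : ∀ u v, ∃ k : ℕ, a u v = k)
    (d μ μ₂ : ℝ) (hd : 0 < d) (hrow : ∀ u, ∑ v, a u v = d)
    (hray : ∀ g : V → ℝ, (∑ v, g v) = 0 →
      (∑ u, ∑ v, a u v * g u * g v) ≤ d * μ₂ * ∑ v, g v ^ 2)
    (hμ₂ : μ₂ ≠ 1)
    (f : V → ℝ) (heig : ∀ u, ∑ v, a u v * f v = d * μ * f u)
    (horth : (∑ v, f v) = 0) (hnz : ∀ v, f v ≠ 0)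
    (hκ : 0 < (1 + μ) / (1 - μ₂) ∧ (1 + μ) / (1 - μ₂) < 1) :
    Real.sqrt (∑ v, (f v - fStr f v) ^ 2) ≤
        Real.sqrt ((1 + μ) / (1 - μ₂)) * Real.sqrt (∑ v, f v ^ 2) ∧
      Real.sqrt (∑ v, fStr f v ^ 2) ≥
        Real.sqrt (1 - (1 + μ) / (1 - μ₂)) * Real.sqrt (∑ v, f v ^ 2) :=
  decomposition_str_sml_general a hsym hnn d μ μ₂ hd hrow hray f heig hnz hκ
end

section
/- Let V be a finite set, T : ℓ²(V) → ℓ²(V) self-adjoint with nonnegative entries and constant row sums d > 0, and second largest eigenvalue dμ₂. Suppose for every τ in a group G acting transitively on V there is a permutation ϱ_τ of V with ⟨T1_A, 1_B⟩ = ⟨T1_{τ(A)}, 1_{ϱ_τ(B)}⟩ for all subsets A, B of V. Let y be an eigenvector of T with eigenvalue dμ̃ satisfying 1 + μ̃ < 1 − μ₂. Then for every τ ∈ G, y ∘ τ⁻¹ = y ∘ ϱ_τ⁻¹, and y ∘ τ⁻¹ is again an eigenvector of T with eigenvalue dμ̃. -/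
/-!
Both `y ∘ τ⁻¹` and `y ∘ ϱ_τ⁻¹` are obtained from `y` by relabelling the rows, respectively the
columns, of `T`; by symmetry of `T`, `T` maps each of them to `dμ̃` times the other. Their
difference therefore has eigenvalue `-dμ̃` and is orthogonal to the constants, so the Rayleigh
bound forces `-dμ̃ ≤ dμ₂`, contradicting the gap `μ̃ + μ₂ < 0` unless the difference vanishes.
-/

open Finset

section

variable {V : Type*} [Fintype V] {a : V → V → ℝ}

theorem sum_mul_comp_perm_eq {σ π : Equiv.Perm V} (hinv : ∀ u v, a u v = a (σ u) (π v))
    {c : ℝ} {y : V → ℝ} (heig : ∀ u, ∑ v, a u v * y v = c * y u) (u : V) :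
    ∑ v, a u v * y (π v) = c * y (σ u) := by
  calc ∑ v, a u v * y (π v) = ∑ v, a (σ u) (π v) * y (π v) :=
        sum_congr rfl fun v _ => by rw [← hinv]
    _ = ∑ w, a (σ u) w * y w := Equiv.sum_comp π fun w => a (σ u) w * y w
    _ = c * y (σ u) := heig _

theorem sum_mul_sub_eq_of_swap {c : ℝ} {y z : V → ℝ}
    (hy : ∀ u, ∑ v, a u v * y v = c * z u) (hz : ∀ u, ∑ v, a u v * z v = c * y u) (u : V) :
    ∑ v, a u v * (y v - z v) = -c * (y u - z u) := by
  simp only [mul_sub, sum_sub_distrib, hy, hz]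
  ring

theorem quadForm_eq_of_eigen {c : ℝ} {g : V → ℝ} (heig : ∀ u, ∑ v, a u v * g v = c * g u) :
    ∑ u, ∑ v, a u v * g u * g v = c * ∑ v, g v ^ 2 := by
  rw [mul_sum]
  refine sum_congr rfl fun u _ => ?_
  calc ∑ v, a u v * g u * g v = g u * ∑ v, a u v * g v := by
        rw [mul_sum]; exact sum_congr rfl fun v _ => by ring
    _ = c * g u ^ 2 := by rw [heig]; ring

theorem eq_zero_of_eigen_of_quadForm_le {c K : ℝ} {g : V → ℝ}
    (heig : ∀ u, ∑ v, a u v * g v = c * g u)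
    (hquad : ∑ u, ∑ v, a u v * g u * g v ≤ K * ∑ v, g v ^ 2) (hK : K < c) : g = 0 := by
  rw [quadForm_eq_of_eigen heig] at hquad
  have hnorm : g ⬝ᵥ g = ∑ v, g v ^ 2 := sum_congr rfl fun v _ => (sq (g v)).symm
  have hnonneg : 0 ≤ ∑ v, g v ^ 2 := sum_nonneg fun v _ => sq_nonneg (g v)
  exact dotProduct_self_eq_zero.mp (by nlinarith)

theorem sum_sub_comp_perm_eq_zero (y : V → ℝ) (σ π : Equiv.Perm V) :
    ∑ v, (y (σ v) - y (π v)) = 0 := by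
  rw [sum_sub_distrib, Equiv.sum_comp σ y, Equiv.sum_comp π y, sub_self]

end

theorem translate_eigenvector_general {G V : Type*} [Group G] [Fintype V]
    [MulAction G V]
    (a : V → V → ℝ) (hsym : ∀ u v, a u v = a v u)
    (d μ₂ μt : ℝ) (hd : 0 < d)
    (hray : ∀ g : V → ℝ, (∑ v, g v) = 0 →
      (∑ u, ∑ v, a u v * g u * g v) ≤ d * μ₂ * ∑ v, g v ^ 2)
    (ϱ : G → Equiv.Perm V)
    (hϱ : ∀ (τ : G) (u v : V), a u v = a (τ⁻¹ • u) ((ϱ τ).symm v))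
    (y : V → ℝ)
    (heig : ∀ u, ∑ v, a u v * y v = d * μt * y u)
    (hgap : 1 + μt < 1 - μ₂) :
    ∀ τ : G,
      (fun v => y (τ⁻¹ • v)) = (fun v => y ((ϱ τ).symm v)) ∧
      ∀ u, ∑ v, a u v * y (τ⁻¹ • v) = d * μt * y (τ⁻¹ • u) := by
  intro τ
  let σ : Equiv.Perm V := MulAction.toPerm τ⁻¹
  have hϱτ : ∀ u v, a u v = a (σ u) ((ϱ τ).symm v) := hϱ τ
  have hϱτ' : ∀ u v, a u v = a ((ϱ τ).symm u) (σ v) := fun u v => by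
    rw [hsym, hϱτ, hsym]
  have hyσ := sum_mul_comp_perm_eq hϱτ' heig
  have hyϱ := sum_mul_comp_perm_eq hϱτ heig
  have hdiff : (fun v => y (σ v) - y ((ϱ τ).symm v)) = 0 :=
    eq_zero_of_eigen_of_quadForm_le (sum_mul_sub_eq_of_swap hyσ hyϱ)
      (hray _ (sum_sub_comp_perm_eq_zero y σ (ϱ τ).symm)) (by nlinarith)
  have hcomp : (fun v => y (τ⁻¹ • v)) = (fun v => y ((ϱ τ).symm v)) :=
    funext fun v => sub_eq_zero.mp (congrFun hdiff v)
  exact ⟨hcomp, fun u => (hyσ u).trans (by rw [← congrFun hcomp u])⟩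

/-- Let `T` be self-adjoint on `ℓ²(V)` with nonnegative entries `a u v`, constant row
sums `d > 0`, second largest eigenvalue `d·μ₂` (Rayleigh bound on the complement of
constants).  Suppose a group `G` acts transitively on `V` and for each `τ ∈ G` there
is a permutation `ϱ τ` of `V` with `⟨T1_A,1_B⟩ = ⟨T1_{τ(A)},1_{ϱ_τ(B)}⟩` for all
subsets, i.e. `a u v = a (τ⁻¹ • u) ((ϱ τ)⁻¹ v)` for all `u, v`.  If `y` is an
eigenvector with eigenvalue `d·μ̃` and `1 + μ̃ < 1 − μ₂`, then for every `τ`,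
`y ∘ τ⁻¹ = y ∘ (ϱ τ)⁻¹`, and `y ∘ τ⁻¹` is again an eigenvector with eigenvalue
`d·μ̃`. -/
theorem translate_eigenvector {G V : Type*} [Group G] [Fintype V]
    [MulAction G V] (htrans : MulAction.IsPretransitive G V)
    (a : V → V → ℝ) (hsym : ∀ u v, a u v = a v u) (hnn : ∀ u v, 0 ≤ a u v)
    (d μ₂ μt : ℝ) (hd : 0 < d) (hrow : ∀ u, ∑ v, a u v = d)
    (hray : ∀ g : V → ℝ, (∑ v, g v) = 0 →
      (∑ u, ∑ v, a u v * g u * g v) ≤ d * μ₂ * ∑ v, g v ^ 2)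
    (ϱ : G → Equiv.Perm V)
    (hϱ : ∀ (τ : G) (u v : V), a u v = a (τ⁻¹ • u) ((ϱ τ).symm v))
    (y : V → ℝ) (hy : y ≠ 0)
    (heig : ∀ u, ∑ v, a u v * y v = d * μt * y u)
    (hgap : 1 + μt < 1 - μ₂) :
    ∀ τ : G,
      (fun v => y (τ⁻¹ • v)) = (fun v => y ((ϱ τ).symm v)) ∧
      ∀ u, ∑ v, a u v * y (τ⁻¹ • v) = d * μt * y (τ⁻¹ • u) :=
  translate_eigenvector_general a hsym d μ₂ μt hd hray ϱ hϱ y heig hgap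
end
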